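/- Let a,b,c ≥ 1 be integers and let P = {γ ∈ ℝ_{≥0}^3 : aγ_1+γ_2 ≤ 1, bγ_2+γ_3 ≤ 1, cγ_3 ≤ 1}. Then P equals the convex hull of the eight points (0,0,0), (1/a,0,0), (1/a,0,1/c), (0,0,1/c), (0,(c−1)/(bc),1/c), ((bc−c+1)/(abc),(c−1)/(bc),1/c), (0,1/b,0), and ((b−1)/(ab),1/b,0). -/

import Mathlib

open Set AffineMap

/-!
The coordinates `t = c γ₃`, `s = b γ₂ / (1 - γ₃)`, `l = a γ₁ / (1 - γ₂)` identify the polytope with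
the image of the unit cube under a map that is affine in each of `l`, `s`, `t` separately, and the
eight points are the images of the corners of the cube. Iterating convex combinations along the
three directions puts every point of the polytope in the convex hull of the corner images; the
converse holds because the polytope is convex and contains them.
-/

theorem exists_mem_Icc_mul_eq {K : Type*} [Field K] [LinearOrder K] [IsStrictOrderedRing K]
    {u w : K} (hu : 0 ≤ u) (huw : u ≤ w) : ∃ θ ∈ Icc (0 : K) 1, θ * w = u := by
  rcases huw.lt_or_eq with hlt | rfl
  · have hw : 0 < w := hu.trans_lt hlt
    exact ⟨u / w, ⟨by positivity, (div_le_one hw).2 hlt.le⟩, div_mul_cancel₀ u hw.ne'⟩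
  · exact ⟨1, right_mem_Icc.2 zero_le_one, one_mul u⟩

def splittingPolytope (a b c : ℝ) : Set (ℝ × ℝ × ℝ) :=
  {γ | 0 ≤ γ.1 ∧ 0 ≤ γ.2.1 ∧ 0 ≤ γ.2.2 ∧
    a * γ.1 + γ.2.1 ≤ 1 ∧ b * γ.2.1 + γ.2.2 ≤ 1 ∧ c * γ.2.2 ≤ 1}

theorem convex_splittingPolytope (a b c : ℝ) : Convex ℝ (splittingPolytope a b c) := by
  rintro ⟨x, y, z⟩ ⟨hx, hy, hz, h₁, h₂, h₃⟩ ⟨x', y', z'⟩ ⟨hx', hy', hz', h₁', h₂', h₃'⟩ μ ν hμ hν hμν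
  simp only [splittingPolytope, Prod.smul_mk, Prod.mk_add_mk, smul_eq_mul, mem_ofPred_eq] at *
  refine ⟨by positivity, by positivity, by positivity, ?_, ?_, ?_⟩
  · linear_combination μ * h₁ + ν * h₁' + hμν
  · linear_combination μ * h₂ + ν * h₂' + hμν
  · linear_combination μ * h₃ + ν * h₃' + hμν

noncomputable def splittingParam (a b c : ℝ) (p : ℝ × ℝ × ℝ) : ℝ × ℝ × ℝ :=
  (p.1 * (1 - p.2.1 * (1 - p.2.2 / c) / b) / a, p.2.1 * (1 - p.2.2 / c) / b, p.2.2 / c)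

theorem splittingParam_eq_lineMap (a b c l s t : ℝ) :
    splittingParam a b c (l, s, t) =
      lineMap
        (lineMap (lineMap (splittingParam a b c (0, 0, 0)) (splittingParam a b c (1, 0, 0)) l)
          (lineMap (splittingParam a b c (0, 1, 0)) (splittingParam a b c (1, 1, 0)) l) s)
        (lineMap (lineMap (splittingParam a b c (0, 0, 1)) (splittingParam a b c (1, 0, 1)) l)
          (lineMap (splittingParam a b c (0, 1, 1)) (splittingParam a b c (1, 1, 1)) l) s) t := by
  simp only [splittingParam, lineMap_apply_module, Prod.smul_mk, Prod.mk_add_mk, smul_eq_mul]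
  ext <;> ring

theorem mul_div_nonneg_and_mul_le {K : Type*} [Field K] [LinearOrder K] [IsStrictOrderedRing K]
    {a l w : K} (ha : 0 < a) (hl : l ∈ Icc (0 : K) 1) (hw : 0 ≤ w) :
    0 ≤ l * w / a ∧ a * (l * w / a) ≤ w := by
  rw [mul_div_cancel₀ _ ha.ne']
  exact ⟨by have := hl.1; positivity, mul_le_of_le_one_left hw hl.2⟩

theorem splittingPolytope_eq_image {a b c : ℝ} (ha : 0 < a) (hb : 1 ≤ b) (hc : 1 ≤ c) :
    splittingPolytope a b c = splittingParam a b c '' Icc 0 1 := by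
  apply Subset.antisymm
  · rintro ⟨x, y, z⟩ ⟨hx, hy, hz, h₁, h₂, h₃⟩
    obtain ⟨s, hs, hsy⟩ := exists_mem_Icc_mul_eq (by positivity : 0 ≤ b * y) (le_sub_iff_add_le.2 h₂)
    obtain ⟨l, hl, hlx⟩ := exists_mem_Icc_mul_eq (by positivity : 0 ≤ a * x) (le_sub_iff_add_le.2 h₁)
    refine ⟨(l, s, c * z), ⟨⟨hl.1, hs.1, by positivity⟩, ⟨hl.2, hs.2, h₃⟩⟩, ?_⟩
    have hz' : c * z / c = z := mul_div_cancel_left₀ z (by positivity)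
    have hy' : s * (1 - z) / b = y := by rw [hsy, mul_div_cancel_left₀ y (by positivity)]
    have hx' : l * (1 - y) / a = x := by rw [hlx, mul_div_cancel_left₀ x ha.ne']
    simp only [splittingParam, hz', hy', hx']
  · rintro _ ⟨⟨l, s, t⟩, hlst, rfl⟩
    obtain ⟨⟨hl₀, hs₀, ht₀⟩, hl₁, hs₁, ht₁⟩ : (0 ≤ l ∧ 0 ≤ s ∧ 0 ≤ t) ∧ l ≤ 1 ∧ s ≤ 1 ∧ t ≤ 1 :=
      hlst
    obtain ⟨hz₀, hz⟩ := mul_div_nonneg_and_mul_le (a := c) (by positivity) ⟨ht₀, ht₁⟩ zero_le_one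
    rw [mul_one] at hz₀ hz
    have hz₁ : t / c ≤ 1 := by nlinarith
    obtain ⟨hy₀, hy⟩ :=
      mul_div_nonneg_and_mul_le (a := b) (by positivity) ⟨hs₀, hs₁⟩ (sub_nonneg.2 hz₁)
    have hy₁ : s * (1 - t / c) / b ≤ 1 := by nlinarith
    obtain ⟨hx₀, hx⟩ := mul_div_nonneg_and_mul_le ha ⟨hl₀, hl₁⟩ (sub_nonneg.2 hy₁)
    simp only [splittingPolytope, splittingParam, mem_ofPred_eq]
    exact ⟨hx₀, hy₀, hz₀, by linarith, by linarith, hz⟩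

theorem splittingPolytope_eq_convexHull {a b c : ℝ} (ha : 0 < a) (hb : 1 ≤ b) (hc : 1 ≤ c) :
    splittingPolytope a b c = convexHull ℝ (splittingParam a b c ''
      {(0, 0, 0), (1, 0, 0), (1, 0, 1), (0, 0, 1), (0, 1, 1), (1, 1, 1), (0, 1, 0), (1, 1, 0)}) := by
  set V := splittingParam a b c ''
      {(0, 0, 0), (1, 0, 0), (1, 0, 1), (0, 0, 1), (0, 1, 1), (1, 1, 1), (0, 1, 0), (1, 1, 0)}
  apply Subset.antisymm
  · rw [splittingPolytope_eq_image ha hb hc]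
    rintro _ ⟨⟨l, s, t⟩, ⟨⟨hl₀, hs₀, ht₀⟩, hl₁, hs₁, ht₁⟩, rfl⟩
    have hK := convex_convexHull ℝ V
    rw [splittingParam_eq_lineMap]
    refine hK.lineMap_mem (hK.lineMap_mem (hK.lineMap_mem ?_ ?_ ⟨hl₀, hl₁⟩)
      (hK.lineMap_mem ?_ ?_ ⟨hl₀, hl₁⟩) ⟨hs₀, hs₁⟩) (hK.lineMap_mem (hK.lineMap_mem ?_ ?_ ⟨hl₀, hl₁⟩)
      (hK.lineMap_mem ?_ ?_ ⟨hl₀, hl₁⟩) ⟨hs₀, hs₁⟩) ⟨ht₀, ht₁⟩ <;>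
    exact subset_convexHull ℝ V (mem_image_of_mem _ (by simp))
  · refine convexHull_min ?_ (convex_splittingPolytope a b c)
    rw [splittingPolytope_eq_image ha hb hc]
    refine image_mono ?_
    intro p hp
    simp only [mem_insert_iff, mem_singleton_iff] at hp
    rcases hp with rfl | rfl | rfl | rfl | rfl | rfl | rfl | rfl <;> simp [Prod.le_def]

/-- The splitting polytope `{γ ∈ ℝ_{≥0}^3 : aγ₁+γ₂ ≤ 1, bγ₂+γ₃ ≤ 1, cγ₃ ≤ 1}` of
the mapping `(x^a + x y^b, y z^c)` (integers `a,b,c ≥ 1`) is the convex hull of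
the eight listed points. -/
theorem stmt9 (a b c : ℕ) (ha : 1 ≤ a) (hb : 1 ≤ b) (hc : 1 ≤ c) :
    {γ : ℝ × ℝ × ℝ | 0 ≤ γ.1 ∧ 0 ≤ γ.2.1 ∧ 0 ≤ γ.2.2 ∧
      (a:ℝ) * γ.1 + γ.2.1 ≤ 1 ∧ (b:ℝ) * γ.2.1 + γ.2.2 ≤ 1 ∧ (c:ℝ) * γ.2.2 ≤ 1} =
    convexHull ℝ
      ({((0:ℝ), (0:ℝ), (0:ℝ)),
        (1 / (a:ℝ), 0, 0),
        (1 / (a:ℝ), 0, 1 / (c:ℝ)),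
        (0, 0, 1 / (c:ℝ)),
        (0, ((c:ℝ) - 1) / ((b:ℝ) * c), 1 / (c:ℝ)),
        (((b:ℝ) * c - c + 1) / ((a:ℝ) * b * c), ((c:ℝ) - 1) / ((b:ℝ) * c), 1 / (c:ℝ)),
        (0, 1 / (b:ℝ), 0),
        (((b:ℝ) - 1) / ((a:ℝ) * b), 1 / (b:ℝ), 0)} : Set (ℝ × ℝ × ℝ)) := by
  have ha' : (0 : ℝ) < a := by exact_mod_cast ha
  have hb' : (1 : ℝ) ≤ b := by exact_mod_cast hb
  have hc' : (1 : ℝ) ≤ c := by exact_mod_cast hc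
  refine (splittingPolytope_eq_convexHull ha' hb' hc').trans ?_
  simp only [image_insert_eq, image_singleton]
  congr! <;> simp only [splittingParam] <;> field_simp <;> ring
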